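/- arXiv:1910.09025 — 3 statements merged into one kernel-verified Lean document; each statement's English description precedes it below -/
import Mathlib

section
/- Let n1, nc, nd be natural numbers with nc < n1, let S1d be a real n1 × nd matrix, Sdc a real nd × nc matrix, Sdd a real nd × nd matrix, and form the block matrix G = [[0, S1d], [Sdc, Sdd]] of size (n1 + nd) × (nc + nd). Then there exists a nonzero vector u ∈ ℝ^{n1+nd} with uᵀ G = 0; consequently, for any symmetric positive definite weight matrices D (of size (n1+nd) × (n1+nd)) and E (of size (nc+nd) × (nc+nd)) and every γ > 0, there exists a nonzero u with uᵀ G x < γ ‖u‖_D ‖x‖_E for every nonzero x ∈ ℝ^{nc+nd}, i.e. the matrix inf-sup condition inf_{u≠0} sup_{x≠0} (uᵀ G x)/(‖u‖_D ‖x‖_E) ≥ γ fails for every γ > 0. (Matrix form of Theorem 3.2: the second weak inf-sup condition fails whenever the displacement-gradient space has fewer degrees of freedom than the displacement test space.) -/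
open Matrix

/-- Weighted norm `‖w‖_D = sqrt(wᵀ D w)` for a weight matrix `D`. -/
noncomputable def weightedNorm {ι : Type*} [Fintype ι] (D : Matrix ι ι ℝ) (w : ι → ℝ) : ℝ :=
  Real.sqrt (w ⬝ᵥ (D *ᵥ w))

/-! Only the shape of `G` matters: it has `nc + nd` columns but `n1 + nd > nc + nd` rows, so its
rows are linearly dependent. A nonzero left null vector `u` makes `uᵀ G x` vanish, while
`γ ‖u‖_D ‖x‖_E > 0` for positive definite weights and `x ≠ 0`. -/

theorem Matrix.exists_ne_zero_vecMul_eq_zero_of_card_lt {m n K : Type*} [Fintype m] [Fintype n]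
    [Field K] (A : Matrix m n K) (hcard : Fintype.card n < Fintype.card m) :
    ∃ u : m → K, u ≠ 0 ∧ u ᵥ* A = 0 := by
  have hker : LinearMap.ker A.vecMulLinear ≠ ⊥ := by
    rw [Ne, LinearMap.ker_eq_bot]
    intro hinj
    have := LinearMap.finrank_le_finrank_of_injective hinj
    simp only [Module.finrank_fintype_fun_eq_card] at this
    omega
  obtain ⟨u, hu, hu0⟩ := Submodule.exists_mem_ne_zero_of_ne_bot hker
  exact ⟨u, hu0, hu⟩

theorem Matrix.dotProduct_mulVec_eq_zero_of_vecMul_eq_zero {m n R : Type*} [Fintype m]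
    [Fintype n] [CommSemiring R] {A : Matrix m n R} {u : m → R} (hu : u ᵥ* A = 0)
    (x : n → R) : u ⬝ᵥ (A *ᵥ x) = 0 := by
  rw [dotProduct_mulVec, hu, zero_dotProduct]

theorem weightedNorm_pos {ι : Type*} [Fintype ι] {D : Matrix ι ι ℝ} (hD : D.PosDef)
    {w : ι → ℝ} (hw : w ≠ 0) : 0 < weightedNorm D w :=
  Real.sqrt_pos.mpr (by simpa using hD.dotProduct_mulVec_pos hw)

theorem lt_mul_weightedNorm_of_vecMul_eq_zero {m n : Type*} [Fintype m] [Fintype n]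
    {A : Matrix m n ℝ} {D : Matrix m m ℝ} {E : Matrix n n ℝ} (hD : D.PosDef) (hE : E.PosDef)
    {γ : ℝ} (hγ : 0 < γ) {u : m → ℝ} (hu0 : u ≠ 0) (hu : u ᵥ* A = 0) {x : n → ℝ}
    (hx : x ≠ 0) : u ⬝ᵥ (A *ᵥ x) < γ * weightedNorm D u * weightedNorm E x := by
  rw [dotProduct_mulVec_eq_zero_of_vecMul_eq_zero hu]
  have := weightedNorm_pos hD hu0
  have := weightedNorm_pos hE hx
  positivity

/-- If `nc < n1`, then the block matrix `G = [[0, S1d],[Sdc, Sdd]]` has a nonzero vector `u`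
with `uᵀ G = 0`, and consequently the matrix inf-sup condition for `G` fails for every
constant `γ > 0` and all symmetric positive definite weight matrices. -/
theorem infsup_fails_of_gradient_dofs_lt_displacement_dofs
    (n1 nc nd : ℕ) (hlt : nc < n1)
    (S1d : Matrix (Fin n1) (Fin nd) ℝ)
    (Sdc : Matrix (Fin nd) (Fin nc) ℝ)
    (Sdd : Matrix (Fin nd) (Fin nd) ℝ) :
    (∃ u : Fin n1 ⊕ Fin nd → ℝ, u ≠ 0 ∧
        ∀ x : Fin nc ⊕ Fin nd → ℝ,
          u ⬝ᵥ (Matrix.fromBlocks 0 S1d Sdc Sdd *ᵥ x) = 0) ∧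
      (∀ (D : Matrix (Fin n1 ⊕ Fin nd) (Fin n1 ⊕ Fin nd) ℝ)
          (E : Matrix (Fin nc ⊕ Fin nd) (Fin nc ⊕ Fin nd) ℝ),
        D.PosDef → E.PosDef →
        ∀ γ : ℝ, 0 < γ →
          ∃ u : Fin n1 ⊕ Fin nd → ℝ, u ≠ 0 ∧
            ∀ x : Fin nc ⊕ Fin nd → ℝ, x ≠ 0 →
              u ⬝ᵥ (Matrix.fromBlocks 0 S1d Sdc Sdd *ᵥ x) <
                γ * weightedNorm D u * weightedNorm E x) := by
  have hcard : Fintype.card (Fin nc ⊕ Fin nd) < Fintype.card (Fin n1 ⊕ Fin nd) := by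
    simpa only [Fintype.card_sum, Fintype.card_fin] using Nat.add_lt_add_right hlt nd
  obtain ⟨u, hu0, hu⟩ :=
    (Matrix.fromBlocks 0 S1d Sdc Sdd).exists_ne_zero_vecMul_eq_zero_of_card_lt hcard
  exact ⟨⟨u, hu0, dotProduct_mulVec_eq_zero_of_vecMul_eq_zero hu⟩, fun _ _ hD hE _ hγ =>
    ⟨u, hu0, fun _ hx => lt_mul_weightedNorm_of_vecMul_eq_zero hD hE hγ hu0 hu hx⟩⟩
end

section
/- Let X and Y be real normed vector spaces, let b : X × Y → ℝ be a continuous bilinear form, and let Z_h ⊆ X and Y_h ⊆ Y be finite-dimensional subspaces with dim Z_h = dim Y_h ≥ 1. Suppose that for every continuous linear functional f : Y → ℝ there exists a unique z_h ∈ Z_h with b(z_h, y_h) = f(y_h) for all y_h ∈ Y_h. Then there exists β_h > 0 such that for every nonzero y_h ∈ Y_h there exists a nonzero z_h ∈ Z_h with b(z_h, y_h) ≥ β_h ‖z_h‖_X ‖y_h‖_Y. (Unique solvability of the discrete linear problem for arbitrary data implies a (possibly mesh-dependent) positive inf-sup constant.) -/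
/-!
Consider `Φ : Y_h → (Z_h)'`, `Φ y = b(·, y)|_{Z_h}`. Solvability of the discrete problem for the
Hahn–Banach functional `f` with `f y = ‖y‖` produces `z_h` with `b(z_h, y) ≠ 0`, so `Φ` is
injective. An injective linear map on the finite-dimensional space `Y_h` is bounded below,
`c ‖y‖ ≤ ‖Φ y‖`, and a functional whose norm exceeds `r ≥ 0` takes a value above `r ‖z‖` at some
`z ≠ 0`; this gives the inf-sup condition with `β_h = c / 2`.
-/

namespace ContinuousLinearMap

section NontriviallyNormedField

variable {𝕜 E F G : Type*} [NontriviallyNormedField 𝕜]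
  [NormedAddCommGroup E] [NormedSpace 𝕜 E] [NormedAddCommGroup F] [NormedSpace 𝕜 F]
  [NormedAddCommGroup G] [NormedSpace 𝕜 G]

/-- The operator `y ↦ b(·, y)` from `V` to the dual of `U`, for subspaces `U ⊆ E`, `V ⊆ F`. -/
noncomputable def restrictFlip (b : E →L[𝕜] F →L[𝕜] G) (U : Submodule 𝕜 E)
    (V : Submodule 𝕜 F) : V →L[𝕜] U →L[𝕜] G :=
  ((compL 𝕜 U E G).flip U.subtypeL).comp (b.flip.comp V.subtypeL)

@[simp]
theorem restrictFlip_apply (b : E →L[𝕜] F →L[𝕜] G) (U : Submodule 𝕜 E) (V : Submodule 𝕜 F)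
    (y : V) (z : U) : restrictFlip b U V y z = b z y :=
  rfl

theorem exists_pos_mul_norm_le_of_injective [CompleteSpace 𝕜] [FiniteDimensional 𝕜 E]
    (T : E →L[𝕜] F) (hT : Function.Injective T) : ∃ c > 0, ∀ x, c * ‖x‖ ≤ ‖T x‖ := by
  obtain ⟨K, hK, hanti⟩ := (T : E →ₗ[𝕜] F).injective_iff_antilipschitz.mp hT
  refine ⟨(K : ℝ)⁻¹, by positivity, fun x => ?_⟩
  rw [inv_mul_le_iff₀ (by exact_mod_cast hK)]
  exact T.bound_of_antilipschitz hanti x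

end NontriviallyNormedField

theorem restrictFlip_injective {𝕜 E F : Type*} [RCLike 𝕜] [NormedAddCommGroup E]
    [NormedSpace 𝕜 E] [NormedAddCommGroup F] [NormedSpace 𝕜 F]
    (b : E →L[𝕜] F →L[𝕜] 𝕜) (U : Submodule 𝕜 E) (V : Submodule 𝕜 F)
    (hsolve : ∀ f : F →L[𝕜] 𝕜, ∃ z ∈ U, ∀ y ∈ V, b z y = f y) :
    Function.Injective (restrictFlip b U V) := by
  refine (injective_iff_map_eq_zero _).mpr fun y hy => ?_
  by_contra hy0
  have hy0' : ‖(y : F)‖ ≠ 0 := by simpa using hy0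
  obtain ⟨f, -, hfy⟩ := exists_dual_vector 𝕜 (y : F) hy0'
  obtain ⟨z, hzU, hz⟩ := hsolve f
  have hbzy : b z y = ‖(y : F)‖ := (hz y y.2).trans hfy
  have hzero : b z y = 0 := by simpa using congr($hy ⟨z, hzU⟩)
  exact hy0' (by exact_mod_cast hbzy.symm.trans hzero)

theorem exists_ne_zero_mul_norm_le_apply_of_lt_opNorm {E : Type*} [NormedAddCommGroup E]
    [NormedSpace ℝ E] (φ : E →L[ℝ] ℝ) {r : ℝ} (hr : 0 ≤ r) (hφ : r < ‖φ‖) :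
    ∃ z, z ≠ 0 ∧ r * ‖z‖ ≤ φ z := by
  obtain ⟨z, hz1, hrz⟩ := φ.exists_lt_apply_of_lt_opNorm hφ
  obtain ⟨w, hw1, hrw⟩ : ∃ w, ‖w‖ < 1 ∧ r < φ w := by
    rcases le_or_gt 0 (φ z) with hpos | hneg
    · exact ⟨z, hz1, by rwa [Real.norm_of_nonneg hpos] at hrz⟩
    · exact ⟨-z, by rwa [norm_neg], by rwa [Real.norm_of_nonpos hneg.le, ← map_neg] at hrz⟩
  refine ⟨w, fun hw => by rw [hw, map_zero] at hrw; linarith, ?_⟩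
  calc r * ‖w‖ ≤ r := mul_le_of_le_one_right hr hw1.le
    _ ≤ φ w := hrw.le

end ContinuousLinearMap

theorem infsup_of_discrete_problem_unique_solution_general
    (X Y : Type*) [NormedAddCommGroup X] [NormedSpace ℝ X]
    [NormedAddCommGroup Y] [NormedSpace ℝ Y]
    (b : X →L[ℝ] Y →L[ℝ] ℝ)
    (Zh : Subspace ℝ X) (Yh : Subspace ℝ Y)
    [FiniteDimensional ℝ Yh]
    (hsolve : ∀ f : Y →L[ℝ] ℝ, ∃! z : X, z ∈ Zh ∧ ∀ y ∈ Yh, b z y = f y) :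
    ∃ βh : ℝ, 0 < βh ∧
      ∀ y ∈ Yh, y ≠ 0 → ∃ z ∈ Zh, z ≠ 0 ∧ βh * ‖z‖ * ‖y‖ ≤ b z y := by
  obtain ⟨c, hc, hbound⟩ :=
    ContinuousLinearMap.exists_pos_mul_norm_le_of_injective (E := Yh) (F := Zh →L[ℝ] ℝ) _
      (b.restrictFlip_injective Zh Yh fun f => (hsolve f).exists)
  refine ⟨c / 2, by positivity, fun y hy hy0 => ?_⟩
  have hlt : c / 2 * ‖y‖ < ‖b.restrictFlip Zh Yh ⟨y, hy⟩‖ :=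
    (mul_lt_mul_of_pos_right (half_lt_self hc) (norm_pos_iff.mpr hy0)).trans_le (hbound ⟨y, hy⟩)
  obtain ⟨z, hz0, hz⟩ :=
    ContinuousLinearMap.exists_ne_zero_mul_norm_le_apply_of_lt_opNorm _ (by positivity) hlt
  refine ⟨z, z.2, by exact_mod_cast hz0, ?_⟩
  calc c / 2 * ‖(z : X)‖ * ‖y‖ = c / 2 * ‖y‖ * ‖z‖ := by rw [Submodule.coe_norm]; ring
    _ ≤ b z y := hz

/-- If `dim Z_h = dim Y_h ≥ 1` and the discrete linear problem `b(z_h, y_h) = f(y_h)` for all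
`y_h ∈ Y_h` has a unique solution `z_h ∈ Z_h` for every continuous linear functional `f`, then
the discrete inf-sup condition holds with some (possibly mesh-dependent) constant `β_h > 0`. -/
theorem infsup_of_discrete_problem_unique_solution
    (X Y : Type*) [NormedAddCommGroup X] [NormedSpace ℝ X]
    [NormedAddCommGroup Y] [NormedSpace ℝ Y]
    (b : X →L[ℝ] Y →L[ℝ] ℝ)
    (Zh : Subspace ℝ X) (Yh : Subspace ℝ Y)
    [FiniteDimensional ℝ Zh] [FiniteDimensional ℝ Yh]
    (hdim : Module.finrank ℝ Zh = Module.finrank ℝ Yh)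
    (hpos : 1 ≤ Module.finrank ℝ Yh)
    (hsolve : ∀ f : Y →L[ℝ] ℝ, ∃! z : X, z ∈ Zh ∧ ∀ y ∈ Yh, b z y = f y) :
    ∃ βh : ℝ, 0 < βh ∧
      ∀ y ∈ Yh, y ≠ 0 → ∃ z ∈ Zh, z ≠ 0 ∧ βh * ‖z‖ * ‖y‖ ≤ b z y :=
  infsup_of_discrete_problem_unique_solution_general X Y b Zh Yh hsolve
end

section
/- Fix n ≥ 1 and μ, λ ∈ ℝ. The Neo-Hookean constitutive map P(F) = μ F − μ F^{-T} + 2λ log(det(FᵀF)) F^{-T}, defined on invertible matrices F ∈ ℝ^{n×n}, is Fréchet differentiable at every invertible F, and its derivative in the direction M ∈ ℝ^{n×n} equals μ M + (μ − 2λ log(det(FᵀF))) F^{-T} Mᵀ F^{-T} + 4λ tr(F⁻¹ M) F^{-T}. (The formula for the elasticity tensor A(K):M used in the bilinear form (3.2), with F = I + K.) -/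
open Matrix

attribute [local instance] Matrix.frobeniusNormedAddCommGroup Matrix.frobeniusNormedSpace

/-- The Neo-Hookean first Piola–Kirchhoff stress
`P(F) = μ F − μ F^{-T} + 2λ log(det(FᵀF)) F^{-T}`. -/
noncomputable def neoHookeanStress (n : ℕ) (μ lam : ℝ) (F : Matrix (Fin n) (Fin n) ℝ) :
    Matrix (Fin n) (Fin n) ℝ :=
  μ • F - μ • (F⁻¹)ᵀ + (2 * lam * Real.log (Fᵀ * F).det) • (F⁻¹)ᵀ

/-!
The determinant is a continuous multilinear function of the rows, so its derivative at `F` in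
the direction `M` is `∑ i, det (F with row i replaced by M i)`; expanding each term along the
replaced row gives Jacobi's formula `tr (adj F * M)`, which is `det F * tr (F⁻¹ * M)` at an
invertible `F`. Since `log det (FᵀF) = 2 log det F`, its derivative is `2 tr (F⁻¹ M)`. Together
with the derivative `M ↦ -F⁻¹ M F⁻¹` of inversion, the product rule gives the formula.
-/

attribute [local instance] Matrix.frobeniusNormedRing Matrix.frobeniusNormedAlgebra

namespace Matrix

section Topological

variable {m n R : Type*} [Semiring R] [TopologicalSpace R]

noncomputable def transposeCLM : Matrix m n R →L[R] Matrix n m R where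
  toLinearMap := (transposeLinearEquiv m n R R).toLinearMap
  cont := continuous_id.matrix_transpose

end Topological

section NormedField

variable {ι 𝕜 : Type*} [Fintype ι] [DecidableEq ι] [NontriviallyNormedField 𝕜]

noncomputable def detContinuousMultilinearMap :
    ContinuousMultilinearMap 𝕜 (fun _ : ι => ι → 𝕜) 𝕜 where
  toMultilinearMap := (detRowAlternating (n := ι) (R := 𝕜)).toMultilinearMap
  cont := continuous_id.matrix_det

/-- The identity map: the Frobenius norm induces the product topology. -/
noncomputable def rowsCLM : Matrix ι ι 𝕜 →L[𝕜] (ι → ι → 𝕜) where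
  toLinearMap := LinearMap.id
  cont := continuous_id

noncomputable def traceMulLeftCLM (A : Matrix ι ι 𝕜) : Matrix ι ι 𝕜 →L[𝕜] 𝕜 where
  toLinearMap := traceLinearMap ι 𝕜 𝕜 ∘ₗ LinearMap.mulLeft 𝕜 A
  cont := (continuous_const.matrix_mul continuous_id).matrix_trace

theorem det_updateRow_eq_sum_adjugate (F : Matrix ι ι 𝕜) (i : ι) (v : ι → 𝕜) :
    (F.updateRow i v).det = ∑ j, F.adjugate j i * v j := by
  rw [← det_transpose, ← updateCol_transpose, ← cramer_apply, cramer_eq_adjugate_mulVec,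
    ← adjugate_transpose]
  rfl

theorem sum_det_updateRow_eq_trace_adjugate_mul (F M : Matrix ι ι 𝕜) :
    ∑ i, (F.updateRow i (M i)).det = (F.adjugate * M).trace := by
  simp only [det_updateRow_eq_sum_adjugate, trace, diag, mul_apply]
  exact Finset.sum_comm

theorem hasFDerivAt_det (F : Matrix ι ι 𝕜) :
    HasFDerivAt det (traceMulLeftCLM F.adjugate) F := by
  have h := (detContinuousMultilinearMap.hasFDerivAt (rowsCLM F)).comp F
    (rowsCLM (𝕜 := 𝕜) (ι := ι)).hasFDerivAt
  refine h.congr_fderiv (ContinuousLinearMap.ext fun M => ?_)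
  change detContinuousMultilinearMap.linearDeriv (rowsCLM F) (rowsCLM M) = _
  rw [ContinuousMultilinearMap.linearDeriv_apply]
  exact sum_det_updateRow_eq_trace_adjugate_mul F M

theorem adjugate_eq_det_smul_inv {F : Matrix ι ι 𝕜} (hF : IsUnit F.det) :
    F.adjugate = F.det • F⁻¹ := by
  rw [inv_def, smul_smul, Ring.mul_inverse_cancel _ hF, one_smul]

theorem hasFDerivAt_det_of_isUnit {F : Matrix ι ι 𝕜} (hF : IsUnit F.det) :
    HasFDerivAt det (F.det • traceMulLeftCLM F⁻¹) F := by
  refine (hasFDerivAt_det F).congr_fderiv (ContinuousLinearMap.ext fun M => ?_)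
  change (F.adjugate * M).trace = F.det * (F⁻¹ * M).trace
  rw [adjugate_eq_det_smul_inv hF, smul_mul, trace_smul, smul_eq_mul]

end NormedField

section Real

variable {ι : Type*} [Fintype ι] [DecidableEq ι]

theorem hasFDerivAt_log_det {F : Matrix ι ι ℝ} (hF : IsUnit F.det) :
    HasFDerivAt (fun A => Real.log A.det) (traceMulLeftCLM F⁻¹) F := by
  refine ((hasFDerivAt_det_of_isUnit hF).log hF.ne_zero).congr_fderiv
    (ContinuousLinearMap.ext fun M => ?_)
  change F.det⁻¹ * (F.det * (F⁻¹ * M).trace) = (F⁻¹ * M).trace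
  rw [inv_mul_cancel_left₀ hF.ne_zero]

theorem log_det_transpose_mul (A : Matrix ι ι ℝ) :
    Real.log (Aᵀ * A).det = 2 * Real.log A.det := by
  rw [det_mul, det_transpose, ← sq, Real.log_pow, Nat.cast_ofNat]

theorem hasFDerivAt_log_det_transpose_mul {F : Matrix ι ι ℝ} (hF : IsUnit F.det) :
    HasFDerivAt (fun A => Real.log (Aᵀ * A).det) ((2 : ℝ) • traceMulLeftCLM F⁻¹) F := by
  simp only [log_det_transpose_mul]
  exact (hasFDerivAt_log_det hF).const_mul 2

end Real

section RCLike

variable {ι 𝕜 : Type*} [Fintype ι] [DecidableEq ι] [RCLike 𝕜]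

theorem hasFDerivAt_inv {F : Matrix ι ι 𝕜} (hF : IsUnit F.det) :
    HasFDerivAt (fun A => A⁻¹) (-ContinuousLinearMap.mulLeftRight 𝕜 _ F⁻¹ F⁻¹) F := by
  obtain ⟨U, rfl⟩ := (isUnit_iff_isUnit_det F).mpr hF
  simp only [nonsing_inv_eq_ringInverse, Ring.inverse_unit]
  exact hasFDerivAt_ringInverse U

theorem hasFDerivAt_inv_transpose {F : Matrix ι ι 𝕜} (hF : IsUnit F.det) :
    HasFDerivAt (fun A => (A⁻¹)ᵀ)
      (-(ContinuousLinearMap.mulLeftRight 𝕜 _ (F⁻¹)ᵀ (F⁻¹)ᵀ ∘L transposeCLM)) F := by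
  refine (transposeCLM.hasFDerivAt.comp F (hasFDerivAt_inv hF)).congr_fderiv
    (ContinuousLinearMap.ext fun M => ?_)
  change (-(F⁻¹ * M * F⁻¹))ᵀ = -((F⁻¹)ᵀ * Mᵀ * (F⁻¹)ᵀ)
  rw [transpose_neg, transpose_mul, transpose_mul, Matrix.mul_assoc]

end RCLike

end Matrix

theorem neoHookean_stress_deriv_general (n : ℕ) (μ lam : ℝ) :
    ∀ F : Matrix (Fin n) (Fin n) ℝ, IsUnit F.det →
      DifferentiableAt ℝ (neoHookeanStress n μ lam) F ∧
      ∀ M : Matrix (Fin n) (Fin n) ℝ,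
        fderiv ℝ (neoHookeanStress n μ lam) F M =
          μ • M + (μ - 2 * lam * Real.log (Fᵀ * F).det) • ((F⁻¹)ᵀ * Mᵀ * (F⁻¹)ᵀ) +
            (4 * lam * (F⁻¹ * M).trace) • (F⁻¹)ᵀ := by
  intro F hF
  have hInvT := hasFDerivAt_inv_transpose hF
  have hP : HasFDerivAt (neoHookeanStress n μ lam) _ F :=
    (((hasFDerivAt_id F).const_smul μ).sub (hInvT.const_smul μ)).add
      (((hasFDerivAt_log_det_transpose_mul hF).const_mul (2 * lam)).smul hInvT)
  refine ⟨hP.differentiableAt, fun M => ?_⟩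
  rw [hP.fderiv]
  -- the `_apply` simp lemmas do not see through the Frobenius instances, so unfold by `change`
  change μ • M - μ • -((F⁻¹)ᵀ * Mᵀ * (F⁻¹)ᵀ) + ((2 * lam * Real.log (Fᵀ * F).det) •
    -((F⁻¹)ᵀ * Mᵀ * (F⁻¹)ᵀ) + (2 * lam * (2 * (F⁻¹ * M).trace)) • (F⁻¹)ᵀ) = _
  module

/-- The Neo-Hookean constitutive map `P` is differentiable at every invertible `F`, with
derivative in the direction `M` given by the elasticity tensor
`A(F)M = μ M + (μ − 2λ log det(FᵀF)) F^{-T} Mᵀ F^{-T} + 4λ tr(F⁻¹M) F^{-T}`. -/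
theorem neoHookean_stress_deriv (n : ℕ) (hn : 1 ≤ n) (μ lam : ℝ) :
    ∀ F : Matrix (Fin n) (Fin n) ℝ, IsUnit F.det →
      DifferentiableAt ℝ (neoHookeanStress n μ lam) F ∧
      ∀ M : Matrix (Fin n) (Fin n) ℝ,
        fderiv ℝ (neoHookeanStress n μ lam) F M =
          μ • M + (μ - 2 * lam * Real.log (Fᵀ * F).det) • ((F⁻¹)ᵀ * Mᵀ * (F⁻¹)ᵀ) +
            (4 * lam * (F⁻¹ * M).trace) • (F⁻¹)ᵀ :=
  neoHookean_stress_deriv_general n μ lam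
end
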